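/- arXiv:0911.4675 — 4 statements merged into one kernel-verified Lean document; each statement's English description precedes it below -/
import Mathlib

section
/- Let g be a map, w a point, and G_m a subset of the m-th preimage set g^{-m}(w). For 1 ≤ j ≤ m set G_{m-j} := g^j(G_m), and call a point p ∈ G_{m-j} branching if g^{-1}(p) ∩ G_{m-j+1} has at least 2 elements. For y ∈ G_m let T_m(y) := {0 ≤ j ≤ m-1 : g^{j+1}(y) is branching}. Suppose that every fiber of g has cardinality at most D (e.g. D = d^{qk}) and that Card T_m(y) ≤ s for every y ∈ G_m. Then Card G_m ≤ D^s. -/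
/-! Give each `y ∈ G_m` the weight `D⁻¹ ^ #T_m(y)`. A Kraft-type inequality says the total
weight is at most `1`: passing from `G_m` to `G_{m-1} = g '' G_m`, the `c ≤ D` points over a
branching point `p` each lose one factor `D⁻¹` relative to `p`, while over a non-branching point
there is only one point, so the weight never increases; for `m = 0` the set `G_0 ⊆ {w}` has
weight at most `1`. Since every weight is at least `D⁻¹ ^ s`, this gives `#G_m ≤ D ^ s`. -/

open Finset
open scoped NNReal

section

variable {X : Type*} [DecidableEq X]

def branchingTimes (g : X → X) (G : Finset X) (m : ℕ) (y : X) : Finset ℕ :=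
  (range m).filter fun j => 2 ≤ ((G.image g^[j]).filter fun x => g x = g^[j + 1] y).card

lemma card_branchingTimes_succ (g : X → X) (G : Finset X) (m : ℕ) (y : X) :
    (branchingTimes g G (m + 1) y).card =
      (branchingTimes g (G.image g) m (g y)).card +
        if 2 ≤ (G.filter fun x => g x = g y).card then 1 else 0 := by
  rw [branchingTimes, branchingTimes, card_filter, card_filter, sum_range_succ']
  simp only [image_image, ← Function.iterate_succ, Function.iterate_succ_apply,
    Function.iterate_zero, image_id, id]
  rfl

lemma natCast_mul_inv_pow_le_one {c D : ℕ} (hc : c ≤ D) :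
    (c : ℝ≥0) * (D : ℝ≥0)⁻¹ ^ (if 2 ≤ c then 1 else 0) ≤ 1 := by
  split_ifs with h
  · rw [pow_one, ← div_eq_mul_inv]
    exact div_le_one_of_le₀ (by exact_mod_cast hc) zero_le
  · rw [pow_zero, mul_one]
    exact_mod_cast (by omega : c ≤ 1)

theorem sum_inv_pow_card_branchingTimes_le_one (g : X → X) (w : X) (D : ℕ)
    (hD : ∀ (S : Finset X) (p : X), (S.filter fun x => g x = p).card ≤ D) (m : ℕ)
    (G : Finset X) (hG : ∀ y ∈ G, g^[m] y = w) :
    ∑ y ∈ G, (D : ℝ≥0)⁻¹ ^ (branchingTimes g G m y).card ≤ 1 := by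
  induction m generalizing G with
  | zero =>
    have hGw : G ⊆ {w} := fun y hy => mem_singleton.2 (hG y hy)
    simp only [branchingTimes, range_zero, filter_empty, card_empty, pow_zero, sum_const, nsmul_one]
    exact_mod_cast card_le_card hGw
  | succ m ih =>
    set u := (D : ℝ≥0)⁻¹
    let c p := (G.filter fun x => g x = p).card
    let k p := (branchingTimes g (G.image g) m p).card
    let f p := u ^ (k p + if 2 ≤ c p then 1 else 0)
    have hfiber : ∀ p, c p • f p ≤ u ^ k p := fun p =>
      calc c p • f p = (c p * u ^ (if 2 ≤ c p then 1 else 0)) * u ^ k p := by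
            simp only [nsmul_eq_mul, f, pow_add]; ring
        _ ≤ 1 * u ^ k p := by
            gcongr; exact natCast_mul_inv_pow_le_one (hD G p)
        _ = _ := one_mul _
    have himage : ∀ p ∈ G.image g, g^[m] p = w := by
      intro p hp
      obtain ⟨y, hy, rfl⟩ := mem_image.1 hp
      simpa [Function.iterate_succ_apply] using hG y hy
    calc ∑ y ∈ G, u ^ (branchingTimes g G (m + 1) y).card
        = ∑ y ∈ G, f (g y) := by simp only [card_branchingTimes_succ]; rfl
      _ = ∑ p ∈ G.image g, c p • f p := sum_comp f g
      _ ≤ ∑ p ∈ G.image g, u ^ k p := sum_le_sum fun p _ => hfiber p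
      _ ≤ 1 := ih (G.image g) himage

end

/-- Misiurewicz–Przytycki style counting in the preimage tree.
`Gm` is a finite set of `m`-th preimages of `w` under `g`. For `0 ≤ j ≤ m-1`, the
point `g^[j+1] y` lies in `G_{m-j-1} = g^[j+1] '' Gm`; it is *branching* if at least two
points of `G_{m-j} = g^[j] '' Gm` are mapped to it by `g`. If every fiber of `g` has at
most `D` points and every `y ∈ Gm` has at most `s` branching times, then `Card Gm ≤ D^s`. -/
theorem stmt0 {X : Type*} [DecidableEq X] (g : X → X) (w : X) (D s m : ℕ)
    (Gm : Finset X) (hGm : ∀ y ∈ Gm, g^[m] y = w)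
    (hD : ∀ (S : Finset X) (p : X), (S.filter (fun x => g x = p)).card ≤ D)
    (hbranch : ∀ y ∈ Gm,
      ((Finset.range m).filter (fun j =>
        2 ≤ ((Gm.image (g^[j])).filter (fun x => g x = g^[j+1] y)).card)).card ≤ s) :
    Gm.card ≤ D ^ s := by
  obtain rfl | ⟨y₀, hy₀⟩ := Gm.eq_empty_or_nonempty
  · simp
  have hD₀ : 0 < D := (card_pos.2 ⟨y₀, by simpa using hy₀⟩).trans_le (hD Gm (g y₀))
  have hu : (D : ℝ≥0)⁻¹ ≤ 1 := inv_le_one_of_one_le₀ (by exact_mod_cast hD₀)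
  have hweight : (Gm.card : ℝ≥0) * (D : ℝ≥0)⁻¹ ^ s ≤ 1 :=
    calc (Gm.card : ℝ≥0) * (D : ℝ≥0)⁻¹ ^ s = ∑ _y ∈ Gm, (D : ℝ≥0)⁻¹ ^ s := by
          rw [sum_const, nsmul_eq_mul]
      _ ≤ ∑ y ∈ Gm, (D : ℝ≥0)⁻¹ ^ (branchingTimes g Gm m y).card :=
          sum_le_sum fun y hy => pow_le_pow_of_le_one zero_le hu (hbranch y hy)
      _ ≤ 1 := sum_inv_pow_card_branchingTimes_le_one g w D hD m Gm hGm
  rw [inv_pow, ← div_eq_mul_inv, div_le_one (by positivity)] at hweight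
  exact_mod_cast hweight
end

section
/- Let g : M → M be a C¹ map of a compact Riemannian manifold with |Jac g| ≤ L everywhere, let 0 < a < 1 and 0 < γ < 1, and set δ_γ := (a/L)^{1/γ}. For y ∈ M let H_m(y) := {0 ≤ i ≤ m−1 : Jac g(g^i(y)) ≤ δ_γ} and H_m[γ] := {y : Card H_m(y) > mγ}. Then for every y ∈ H_m[γ], Jac g^m(y) ≤ a^m; consequently vol(g^m(H_m[γ])) ≤ a^m · vol(M), and the set H[γ] := limsup_m g^m(H_m[γ]) has zero volume. -/
open MeasureTheory

/-- let `g` be a map with Jacobian `J`, `0 ≤ J ≤ L`, satisfying the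
change-of-variables inequality `vol (g^m(A)) ≤ ∫_A Jac g^m` where
`Jac g^m(y) = ∏_{i<m} J(g^i y)`. With `δγ = (a/L)^{1/γ}`,
`H_m(y) = {i < m : J(g^i y) ≤ δγ}` and `H_m[γ] = {y : Card H_m(y) > mγ}`, we get
`Jac g^m ≤ a^m` on `H_m[γ]`, `vol(g^m(H_m[γ])) ≤ a^m vol(M)`, and the limsup set
`H[γ] = limsup_m g^m(H_m[γ])` has zero volume. -/
theorem stmt8 {M : Type*} [MeasurableSpace M]
    (vol : Measure M) [IsFiniteMeasure vol]
    (g : M → M) (hg : Measurable g)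
    (J : M → ℝ) (hJmeas : Measurable J)
    (L a γ : ℝ) (hL : 1 ≤ L) (ha : 0 < a) (ha1 : a < 1) (hγ : 0 < γ) (hγ1 : γ < 1)
    (hJ0 : ∀ x, 0 ≤ J x) (hJL : ∀ x, J x ≤ L)
    (hCV : ∀ (m : ℕ) (A : Set M), MeasurableSet A →
      vol (g^[m] '' A) ≤ ∫⁻ x in A, ENNReal.ofReal (∏ i ∈ Finset.range m, J (g^[i] x)) ∂vol)
    (δγ : ℝ) (hδγ : δγ = (a / L) ^ (1 / γ))
    (Hm : ℕ → Set M)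
    (hHm : ∀ m, Hm m = {y | (m : ℝ) * γ < ({i | i < m ∧ J (g^[i] y) ≤ δγ} : Set ℕ).ncard}) :
    (∀ (m : ℕ), ∀ y ∈ Hm m, ∏ i ∈ Finset.range m, J (g^[i] y) ≤ a ^ m) ∧
    (∀ m : ℕ, vol (g^[m] '' Hm m) ≤ ENNReal.ofReal (a ^ m) * vol Set.univ) ∧
    vol (⋂ n : ℕ, ⋃ m : ℕ, ⋃ (_ : n ≤ m), g^[m] '' Hm m) = 0 := by
  have hLpos : (0:ℝ) < L := lt_of_lt_of_le one_pos hL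
  have hdiv_pos : 0 < a / L := div_pos ha hLpos
  have hdiv_le1 : a / L ≤ 1 := by
    rw [div_le_one hLpos]; linarith
  have hδpos : 0 < δγ := by rw [hδγ]; exact Real.rpow_pos_of_pos hdiv_pos _
  have hδ1 : δγ ≤ 1 := by
    rw [hδγ]; exact Real.rpow_le_one hdiv_pos.le hdiv_le1 (by positivity)
  -- Part 1
  have part1 : ∀ (m : ℕ), ∀ y ∈ Hm m, ∏ i ∈ Finset.range m, J (g^[i] y) ≤ a ^ m := by
    intro m y hy
    rw [hHm] at hy
    set p : ℕ → Prop := fun i => J (g^[i] y) ≤ δγ with hp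
    have hdec : DecidablePred p := fun i => Real.decidableLE _ _
    set S : Finset ℕ := (Finset.range m).filter p with hS
    have hset : ({i | i < m ∧ J (g^[i] y) ≤ δγ} : Set ℕ) = ↑S := by
      ext i; simp [hS, hp, Finset.mem_filter, Finset.mem_range]
    rw [Set.mem_setOf_eq, hset, Set.ncard_coe_finset] at hy
    have hcard : S.card ≤ m := by
      simpa using Finset.card_le_card (Finset.filter_subset p (Finset.range m))
    have hsplit : (∏ i ∈ S, J (g^[i] y)) * (∏ i ∈ (Finset.range m).filter (fun i => ¬ p i),
        J (g^[i] y)) = ∏ i ∈ Finset.range m, J (g^[i] y) :=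
      Finset.prod_filter_mul_prod_filter_not _ _ _
    have hb1 : ∏ i ∈ S, J (g^[i] y) ≤ δγ ^ S.card := by
      calc ∏ i ∈ S, J (g^[i] y) ≤ ∏ _i ∈ S, δγ := by
            apply Finset.prod_le_prod (fun i _ => hJ0 _)
            intro i hi
            exact (Finset.mem_filter.mp hi).2
        _ = δγ ^ S.card := Finset.prod_const _
    have hb2 : ∏ i ∈ (Finset.range m).filter (fun i => ¬ p i), J (g^[i] y) ≤ L ^ m := by
      calc ∏ i ∈ (Finset.range m).filter (fun i => ¬ p i), J (g^[i] y)
          ≤ ∏ _i ∈ (Finset.range m).filter (fun i => ¬ p i), L :=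
            Finset.prod_le_prod (fun i _ => hJ0 _) (fun i _ => hJL _)
        _ = L ^ ((Finset.range m).filter (fun i => ¬ p i)).card := Finset.prod_const _
        _ ≤ L ^ m := by
            apply pow_le_pow_right₀ hL
            simpa using Finset.card_le_card (Finset.filter_subset _ (Finset.range m))
    have hb1' : δγ ^ S.card ≤ (a / L) ^ m := by
      have h1 : δγ ^ S.card = δγ ^ (S.card : ℝ) := (Real.rpow_natCast _ _).symm
      have h2 : δγ ^ (S.card : ℝ) ≤ δγ ^ ((m : ℝ) * γ) :=
        Real.rpow_le_rpow_of_exponent_ge hδpos hδ1 hy.le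
      have h3 : δγ ^ ((m : ℝ) * γ) = (a / L) ^ (m : ℝ) := by
        rw [hδγ, ← Real.rpow_mul hdiv_pos.le]
        congr 1
        field_simp
      rw [h1]
      calc δγ ^ (S.card : ℝ) ≤ δγ ^ ((m : ℝ) * γ) := h2
        _ = (a / L) ^ (m : ℝ) := h3
        _ = (a / L) ^ m := Real.rpow_natCast _ _
    calc ∏ i ∈ Finset.range m, J (g^[i] y)
        = (∏ i ∈ S, J (g^[i] y)) * (∏ i ∈ (Finset.range m).filter (fun i => ¬ p i),
            J (g^[i] y)) := hsplit.symm
      _ ≤ (a / L) ^ m * L ^ m := by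
          apply mul_le_mul (hb1.trans hb1') hb2
            (Finset.prod_nonneg (fun i _ => hJ0 _)) (by positivity)
      _ = a ^ m := by
          rw [div_pow, div_mul_cancel₀]
          positivity
  -- measurability of Hm m
  have hmeasHm : ∀ m, MeasurableSet (Hm m) := by
    intro m
    rw [hHm]
    have hF : Measurable (fun y => (({i | i < m ∧ J (g^[i] y) ≤ δγ} : Set ℕ).ncard : ℝ)) := by
      have heq : (fun y => (({i | i < m ∧ J (g^[i] y) ≤ δγ} : Set ℕ).ncard : ℝ)) =
          fun y => ∑ i ∈ Finset.range m, (if J (g^[i] y) ≤ δγ then (1:ℝ) else 0) := by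
        funext y
        have hset : ({i | i < m ∧ J (g^[i] y) ≤ δγ} : Set ℕ)
            = ↑((Finset.range m).filter (fun i => J (g^[i] y) ≤ δγ)) := by
          ext i; simp [Finset.mem_filter, Finset.mem_range]
        rw [hset, Set.ncard_coe_finset, Finset.card_filter]
        push_cast
        rfl
      rw [heq]
      apply Finset.measurable_sum
      intro i _
      exact Measurable.ite
        (measurableSet_le (hJmeas.comp (hg.iterate i)) measurable_const)
        measurable_const measurable_const
    exact measurableSet_lt measurable_const hF
  -- Part 2
  have part2 : ∀ m : ℕ, vol (g^[m] '' Hm m) ≤ ENNReal.ofReal (a ^ m) * vol Set.univ := by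
    intro m
    calc vol (g^[m] '' Hm m)
        ≤ ∫⁻ x in Hm m, ENNReal.ofReal (∏ i ∈ Finset.range m, J (g^[i] x)) ∂vol :=
          hCV m (Hm m) (hmeasHm m)
      _ ≤ ∫⁻ _x in Hm m, ENNReal.ofReal (a ^ m) ∂vol := by
          apply setLIntegral_mono measurable_const
          intro x hx
          exact ENNReal.ofReal_le_ofReal (part1 m x hx)
      _ = ENNReal.ofReal (a ^ m) * vol (Hm m) := setLIntegral_const _ _
      _ ≤ ENNReal.ofReal (a ^ m) * vol Set.univ :=
          mul_le_mul_right (measure_mono (Set.subset_univ _)) _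
  refine ⟨part1, part2, ?_⟩
  -- Part 3
  have hsum : (∑' m, vol (g^[m] '' Hm m)) ≠ ⊤ := by
    have hle : (∑' m, vol (g^[m] '' Hm m)) ≤ ∑' m, ENNReal.ofReal (a ^ m) * vol Set.univ :=
      ENNReal.tsum_le_tsum part2
    have heq : (∑' m : ℕ, ENNReal.ofReal (a ^ m) * vol Set.univ)
        = (1 - ENNReal.ofReal a)⁻¹ * vol Set.univ := by
      rw [ENNReal.tsum_mul_right, ← ENNReal.tsum_geometric]
      congr 1
      exact tsum_congr fun m => ENNReal.ofReal_pow ha.le m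
    refine ne_top_of_le_ne_top ?_ (hle.trans heq.le)
    apply ENNReal.mul_ne_top _ (measure_ne_top _ _)
    rw [ENNReal.inv_ne_top]
    have : ENNReal.ofReal a < 1 := by
      rw [← ENNReal.ofReal_one]
      exact ENNReal.ofReal_lt_ofReal_iff_of_nonneg ha.le |>.mpr ha1
    exact (tsub_pos_of_lt this).ne'
  have hz := measure_limsup_atTop_eq_zero hsum
  rw [Filter.limsup_eq_iInf_iSup_of_nat] at hz
  exact hz
end

section
/- Let g : M → M be a C¹ map of a compact metric space with Jac g continuous, δ > 0, and suppose g is injective on each ball of radius κ around points outside C_g(δ/2) := {Jac g ≤ δ/2}, in the following sense: if y, y' ∉ C_g(δ/2), d(y, y') ≤ κ and y ≠ y', then g(y) ≠ g(y'). Assume moreover |Jac g(y) − Jac g(y')| ≤ L' d(y, y') with L' κ ≤ δ/2. Then for any y and any point h with d(g^i(y), h) ≤ κ, g^i(y) ≠ h and g^{i+1}(y) = g(h), both g^i(y) and h lie in C_g(δ) := {Jac g ≤ δ}. In other words, F_m(y) ⊆ H_m(y), where F_m(y) := {0 ≤ i ≤ m−1 : ∃h, d(g^i(y), h) ≤ κ,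 g^i(y) ≠ h, g^{i+1}(y) = g(h)} and H_m(y) := {0 ≤ i ≤ m−1 : g^i(y) ∈ C_g(δ)}. -/
/-- key inclusion of Lemma 5.5. If `g` is injective at scale `κ` outside
`C_g(δ/2) = {J ≤ δ/2}`, `J` is `L'`-Lipschitz and `L' κ ≤ δ/2`, then whenever a point
`h ≠ g^i(y)` with `d(g^i(y), h) ≤ κ` satisfies `g(h) = g^{i+1}(y)`, both `g^i(y)` and
`h` lie in `C_g(δ) = {J ≤ δ}`; hence `F_m(y) ⊆ H_m(y)`. -/
theorem stmt9 {M : Type*} [MetricSpace M]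
    (g : M → M) (J : M → ℝ) (hJcont : Continuous J)
    (δ κ L' : ℝ) (hδ : 0 < δ) (hκ : 0 < κ)
    (hinj : ∀ y y' : M, δ / 2 < J y → δ / 2 < J y' → dist y y' ≤ κ → y ≠ y' →
      g y ≠ g y')
    (hLip : ∀ y y' : M, |J y - J y'| ≤ L' * dist y y')
    (hκδ : L' * κ ≤ δ / 2) :
    (∀ (y h : M) (i : ℕ), dist (g^[i] y) h ≤ κ → g^[i] y ≠ h → g^[i+1] y = g h →
      J (g^[i] y) ≤ δ ∧ J h ≤ δ) ∧
    (∀ (m : ℕ) (y : M),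
      {i | i < m ∧ ∃ h : M, dist (g^[i] y) h ≤ κ ∧ g^[i] y ≠ h ∧ g^[i+1] y = g h} ⊆
      {i | i < m ∧ J (g^[i] y) ≤ δ}) := by
  have key : ∀ (y h : M) (i : ℕ), dist (g^[i] y) h ≤ κ → g^[i] y ≠ h → g^[i+1] y = g h →
      J (g^[i] y) ≤ δ ∧ J h ≤ δ := by
    intro y h i hd hne heq
    set x := g^[i] y with hx
    -- can't have both J x > δ/2 and J h > δ/2
    have hmin : J x ≤ δ / 2 ∨ J h ≤ δ / 2 := by
      by_contra hc
      push_neg at hc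
      exact hinj x h hc.1 hc.2 hd hne
        (by rw [← heq, Function.iterate_succ_apply'])
    have hL : L' * dist x h ≤ δ / 2 := by
      have hL0 : 0 ≤ L' := by
        have hdp : 0 < dist x h := dist_pos.mpr hne
        nlinarith [abs_nonneg (J x - J h), hLip x h]
      calc L' * dist x h ≤ L' * κ := by nlinarith
        _ ≤ δ / 2 := hκδ
    have h1 := abs_le.mp ((hLip x h).trans hL)
    rcases hmin with hm | hm
    · constructor <;> nlinarith [h1.1, h1.2]
    · constructor <;> nlinarith [h1.1, h1.2]
  refine ⟨key, ?_⟩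
  intro m y i hi
  obtain ⟨him, h, hd, hne, heq⟩ := hi
  exact ⟨him, (key y h i hd hne heq).1⟩
end

section
/- Let (k₁, k₂) be positive integers, A : ℂ^{k₁} → ℂ^{k₁} an invertible linear map, B : ℂ^{k₂} → ℂ^{k₂} linear with ‖B‖ < ‖A^{−1}‖^{−1}, and set γ := 1 − ‖B‖‖A^{−1}‖ ∈ (0,1]. Let 0 ≤ γ₀ ≤ 1 and δ > 0 satisfy γ₀(1−γ) + 2δ(1+γ₀)‖A^{−1}‖ ≤ 1 and (γ₀‖B‖ + δ(1+γ₀)) ≤ γ₀(‖A^{−1}‖^{−1} − δ(1+γ₀)). Let g = (g₁, g₂) : D^k(R₀) → D^k(R₁) be holomorphic with g(0) = 0, d₀g = (A, B) block diagonal, and ‖d_w g − d₀g‖ ≤ δ on D^k(R₀). Let φ : V ⊆ D^{k₂}(R₁) → ℂ^{k₁} satisfy φ(0) = 0 and Lip φ ≤ γ₀. Then for each y in U := {y ∈ D^{k₂}(R₀) : g₂(L(y)) ⊆ V}, where L(y) := {(x,y) : |x| ≤ |y|}, the map Λ_y(x) := A^{−1}[φ(g₂(x,y)) − (g₁(x,y)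 − Ax)] sends the closed ball of radius |y| in ℂ^{k₁} into itself and is a contraction; hence it has a unique fixed point ψ(y), the resulting map ψ : U → ℂ^{k₁} satisfies Lip ψ ≤ γ₀ and g(graph ψ) ⊆ graph φ. -/
/-!
By the mean value inequality, `g - (A, B)` is `δ`-Lipschitz on the ball, and `g₁ = φ ∘ g₂` at
`(x, y)` is the fixed-point equation `x = Λ_y x`. On the cones `‖x‖ ≤ ‖y‖` this gives
`‖Λ_y x - Λ_y' x'‖ ≤ a ‖y - y'‖ + K max (‖x - x'‖, ‖y - y'‖)` with `a = ‖A⁻¹‖ γ₀ ‖B‖` and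
`K = ‖A⁻¹‖ δ (1 + γ₀)`, and the second condition on `γ₀, δ` is exactly `a + K ≤ γ₀ (1 - K)`.
Comparing with `(x', y') = (0, 0)` shows that `Λ_y` maps the ball of radius `‖y‖` into itself,
taking `y = y'` shows it is a `K`-contraction, and at two fixed points the bound
`d ≤ a e + K max (d, e)` forces `d ≤ γ₀ e`.
-/

open Metric Set Function

theorem le_mul_of_le_add_mul_max {a K γ₀ d e : ℝ} (hK0 : 0 ≤ K) (hK1 : K < 1) (hγ₀ : 0 ≤ γ₀)
    (hsum : a + K ≤ γ₀ * (1 - K)) (he : 0 ≤ e) (h : d ≤ a * e + K * max d e) : d ≤ γ₀ * e := by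
  rcases le_total d e with hde | hed
  · rw [max_eq_right hde] at h
    nlinarith [mul_nonneg (mul_nonneg hγ₀ hK0) he]
  · rw [max_eq_left hed] at h
    nlinarith [mul_nonneg hK0 he]

theorem lt_one_of_add_le_mul_one_sub {a K γ₀ : ℝ} (ha : 0 ≤ a) (hγ₀ : 0 ≤ γ₀)
    (h : a + K ≤ γ₀ * (1 - K)) : K < 1 := by
  nlinarith

theorem add_le_mul_one_sub_of_le_mul_inv_sub {α b c γ₀ : ℝ} (hα : 0 ≤ α) (hγ₀ : 0 ≤ γ₀)
    (h : γ₀ * b + c ≤ γ₀ * (α⁻¹ - c)) : α * γ₀ * b + α * c ≤ γ₀ * (1 - α * c) := by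
  have hαα : α * α⁻¹ ≤ 1 := mul_inv_le_one
  nlinarith [mul_le_mul_of_nonneg_left h hα]

theorem exists_isFixedPt_of_dist_le {α : Type*} [MetricSpace α] {f : α → α} {s : Set α} {K : ℝ}
    (hsc : IsComplete s) (hs : s.Nonempty) (hK : K < 1) (hsf : MapsTo f s s)
    (hf : ∀ x ∈ s, ∀ y ∈ s, dist (f x) (f y) ≤ K * dist x y) : ∃ x ∈ s, IsFixedPt f x := by
  obtain ⟨x, hx⟩ := hs
  have hcontr : ContractingWith K.toNNReal (hsf.restrict f s s) :=
    ⟨Real.toNNReal_lt_one.mpr hK, LipschitzWith.of_dist_le' fun u v => hf u u.2 v v.2⟩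
  obtain ⟨y, hys, hfy, -⟩ := hcontr.exists_fixedPoint' hsc hsf hx (edist_ne_top _ _)
  exact ⟨y, hys, hfy⟩

section

variable {E F : Type*} [NormedAddCommGroup E] [NormedAddCommGroup F]

def ConeLipschitzBound (Λ : F → E → E) (U : Set F) (a K : ℝ) : Prop :=
  ∀ y ∈ U, ∀ y' ∈ U, ∀ x x' : E, ‖x‖ ≤ ‖y‖ → ‖x'‖ ≤ ‖y'‖ →
    ‖Λ y x - Λ y' x'‖ ≤ a * ‖y - y'‖ + K * max ‖x - x'‖ ‖y - y'‖

namespace ConeLipschitzBound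

variable {Λ : F → E → E} {U : Set F} {a K : ℝ}

theorem norm_apply_le (hΛ : ConeLipschitzBound Λ U a K) (hU0 : 0 ∈ U) (hΛ0 : Λ 0 0 = 0)
    (haK : a + K ≤ 1) {y : F} (hy : y ∈ U) {x : E} (hx : ‖x‖ ≤ ‖y‖) : ‖Λ y x‖ ≤ ‖y‖ := by
  have h := hΛ y hy 0 hU0 x 0 hx (by simp)
  rw [hΛ0, sub_zero, sub_zero, sub_zero, max_eq_right hx] at h
  nlinarith [norm_nonneg y]

theorem norm_sub_le (hΛ : ConeLipschitzBound Λ U a K) {y : F} (hy : y ∈ U) {x x' : E}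
    (hx : ‖x‖ ≤ ‖y‖) (hx' : ‖x'‖ ≤ ‖y‖) : ‖Λ y x - Λ y x'‖ ≤ K * ‖x - x'‖ := by
  simpa using hΛ y hy y hy x x' hx hx'

theorem eq_of_isFixedPt (hΛ : ConeLipschitzBound Λ U a K) (hK1 : K < 1) {y : F} (hy : y ∈ U)
    {x x' : E} (hx : ‖x‖ ≤ ‖y‖) (hx' : ‖x'‖ ≤ ‖y‖) (hfx : IsFixedPt (Λ y) x)
    (hfx' : IsFixedPt (Λ y) x') : x = x' := by
  have h := hΛ.norm_sub_le hy hx hx'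
  rw [hfx, hfx'] at h
  have : ‖x - x'‖ ≤ 0 := by nlinarith [norm_nonneg (x - x')]
  exact sub_eq_zero.mp (norm_le_zero_iff.mp this)

theorem exists_isFixedPt [CompleteSpace E] (hΛ : ConeLipschitzBound Λ U a K) (hU0 : 0 ∈ U)
    (hΛ0 : Λ 0 0 = 0) (haK : a + K ≤ 1) (hK1 : K < 1) {y : F} (hy : y ∈ U) :
    ∃ x : E, ‖x‖ ≤ ‖y‖ ∧ IsFixedPt (Λ y) x := by
  have hmaps : MapsTo (Λ y) (closedBall 0 ‖y‖) (closedBall 0 ‖y‖) := fun x hx => by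
    rw [mem_closedBall_zero_iff] at hx ⊢
    exact hΛ.norm_apply_le hU0 hΛ0 haK hy hx
  obtain ⟨x, hx, hfx⟩ := exists_isFixedPt_of_dist_le isClosed_closedBall.isComplete
    (nonempty_closedBall.mpr (norm_nonneg y)) hK1 hmaps fun x hx x' hx' => by
      rw [mem_closedBall_zero_iff] at hx hx'
      simpa only [dist_eq_norm] using hΛ.norm_sub_le hy hx hx'
  exact ⟨x, mem_closedBall_zero_iff.mp hx, hfx⟩

theorem norm_sub_le_of_isFixedPt (hΛ : ConeLipschitzBound Λ U a K) {γ₀ : ℝ} (hK0 : 0 ≤ K)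
    (hK1 : K < 1) (hγ₀ : 0 ≤ γ₀) (hsum : a + K ≤ γ₀ * (1 - K)) {y y' : F} (hy : y ∈ U)
    (hy' : y' ∈ U) {x x' : E} (hx : ‖x‖ ≤ ‖y‖) (hx' : ‖x'‖ ≤ ‖y'‖) (hfx : IsFixedPt (Λ y) x)
    (hfx' : IsFixedPt (Λ y') x') : ‖x - x'‖ ≤ γ₀ * ‖y - y'‖ := by
  have h := hΛ y hy y' hy' x x' hx hx'
  rw [hfx, hfx'] at h
  exact le_mul_of_le_add_mul_max hK0 hK1 hγ₀ hsum (norm_nonneg _) h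

theorem exists_lipschitz_fixedPoint_section [CompleteSpace E] (hΛ : ConeLipschitzBound Λ U a K)
    {γ₀ : ℝ} (hU0 : 0 ∈ U) (hΛ0 : Λ 0 0 = 0) (hK0 : 0 ≤ K) (hK1 : K < 1) (hγ₀0 : 0 ≤ γ₀)
    (haK : a + K ≤ 1) (hsum : a + K ≤ γ₀ * (1 - K)) :
    ∃ ψ : F → E,
      (∀ y ∈ U, ‖ψ y‖ ≤ ‖y‖ ∧ Λ y (ψ y) = ψ y ∧ ∀ x : E, ‖x‖ ≤ ‖y‖ → Λ y x = x → x = ψ y) ∧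
      ∀ y ∈ U, ∀ y' ∈ U, ‖ψ y - ψ y'‖ ≤ γ₀ * ‖y - y'‖ := by
  have hfix : ∀ y, ∃ x : E, y ∈ U → ‖x‖ ≤ ‖y‖ ∧ IsFixedPt (Λ y) x := fun y => by
    by_cases hy : y ∈ U
    · obtain ⟨x, hx⟩ := hΛ.exists_isFixedPt hU0 hΛ0 haK hK1 hy
      exact ⟨x, fun _ => hx⟩
    · exact ⟨0, fun h => absurd h hy⟩
  choose ψ hψ using hfix
  refine ⟨ψ, fun y hy => ⟨(hψ y hy).1, (hψ y hy).2, fun x hx hfx => ?_⟩, fun y hy y' hy' => ?_⟩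
  · exact hΛ.eq_of_isFixedPt hK1 hy hx (hψ y hy).1 hfx (hψ y hy).2
  · exact hΛ.norm_sub_le_of_isFixedPt hK0 hK1 hγ₀0 hsum hy hy' (hψ y hy).1 (hψ y' hy').1
      (hψ y hy).2 (hψ y' hy').2

end ConeLipschitzBound

end

section GraphTransform

variable {𝕜 E F : Type*} [RCLike 𝕜] [NormedAddCommGroup E] [NormedSpace 𝕜 E]

/-- With `g = (A x + r₁(x, y), g₂(x, y))`, the equation `g₁(x, y) = φ(g₂(x, y))` reads
`x = A⁻¹ (φ(g₂(x, y)) - r₁(x, y))`. -/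
def graphTransformMap (A : E ≃L[𝕜] E) (g : E × F → E × F) (φ : F → E) (y : F) (x : E) : E :=
  A.symm (φ (g (x, y)).2 - ((g (x, y)).1 - A x))

theorem graphTransformMap_eq_self_iff {A : E ≃L[𝕜] E} {g : E × F → E × F} {φ : F → E} {y : F}
    {x : E} : graphTransformMap A g φ y x = x ↔ (g (x, y)).1 = φ (g (x, y)).2 := by
  rw [graphTransformMap, ContinuousLinearEquiv.symm_apply_eq, sub_eq_iff_eq_add, add_sub_cancel,
    eq_comm]

theorem graphTransformMap_zero [Zero F] {A : E ≃L[𝕜] E} {g : E × F → E × F} {φ : F → E}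
    (hg0 : g 0 = 0) (hφ0 : φ 0 = 0) : graphTransformMap A g φ 0 0 = 0 := by
  simp [graphTransformMap, ← Prod.zero_eq_mk, hg0, hφ0]

theorem norm_graphTransformMap_sub_le [NormedAddCommGroup F] [NormedSpace 𝕜 F] [NormedSpace ℝ E]
    [NormedSpace ℝ F] {A : E ≃L[𝕜] E} {B : F →L[𝕜] F} {g : E × F → E × F} {φ : F → E}
    {s : Set (E × F)} {V : Set F} {γ₀ δ : ℝ} (hs : Convex ℝ s)
    (hg : ∀ w ∈ s, DifferentiableAt 𝕜 g w)
    (hdg : ∀ w ∈ s, ‖fderiv 𝕜 g w - (A : E →L[𝕜] E).prodMap B‖ ≤ δ) (hγ₀ : 0 ≤ γ₀)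
    (hφ : ∀ v ∈ V, ∀ v' ∈ V, ‖φ v - φ v'‖ ≤ γ₀ * ‖v - v'‖) {x x' : E} {y y' : F}
    (hw : (x, y) ∈ s) (hw' : (x', y') ∈ s) (hv : (g (x, y)).2 ∈ V) (hv' : (g (x', y')).2 ∈ V) :
    ‖graphTransformMap A g φ y x - graphTransformMap A g φ y' x'‖ ≤
      ‖(A.symm : E →L[𝕜] E)‖ * γ₀ * ‖B‖ * ‖y - y'‖ +
        ‖(A.symm : E →L[𝕜] E)‖ * (δ * (1 + γ₀)) * max ‖x - x'‖ ‖y - y'‖ := by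
  set M := max ‖x - x'‖ ‖y - y'‖
  have hmv := hs.norm_image_sub_le_of_norm_fderiv_le' hg hdg hw' hw
  rw [show (x, y) - (x', y') = (x - x', y - y') from rfl, Prod.norm_mk] at hmv
  have h₁ : ‖(g (x, y)).1 - (g (x', y')).1 - A (x - x')‖ ≤ δ * M := (norm_fst_le _).trans hmv
  have h₂ : ‖(g (x, y)).2 - (g (x', y')).2 - B (y - y')‖ ≤ δ * M := (norm_snd_le _).trans hmv
  have hv₂ : ‖(g (x, y)).2 - (g (x', y')).2‖ ≤ ‖B‖ * ‖y - y'‖ + δ * M :=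
    calc _ ≤ ‖B (y - y')‖ + ‖(g (x, y)).2 - (g (x', y')).2 - B (y - y')‖ :=
          norm_le_norm_add_norm_sub' _ _
      _ ≤ ‖B‖ * ‖y - y'‖ + δ * M := add_le_add (B.le_opNorm _) h₂
  have hsplit : graphTransformMap A g φ y x - graphTransformMap A g φ y' x' =
      A.symm ((φ (g (x, y)).2 - φ (g (x', y')).2) -
        ((g (x, y)).1 - (g (x', y')).1 - A (x - x'))) := by
    rw [graphTransformMap, graphTransformMap, ← map_sub, A.map_sub]
    congr 1
    abel
  calc _ ≤ ‖(A.symm : E →L[𝕜] E)‖ * (γ₀ * (‖B‖ * ‖y - y'‖ + δ * M) + δ * M) := by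
        rw [hsplit]
        refine ((A.symm : E →L[𝕜] E).le_opNorm _).trans
          (mul_le_mul_of_nonneg_left ?_ (norm_nonneg _))
        exact (norm_sub_le _ _).trans
          (add_le_add ((hφ _ hv _ hv').trans (mul_le_mul_of_nonneg_left hv₂ hγ₀)) h₁)
    _ = _ := by ring

/-- The paper's `U = {y ∈ D(R) : g₂(L(y)) ⊆ V}`, where `L(y)` is the cone `‖x‖ ≤ ‖y‖`. -/
def coneDomain [Norm F] (g : E × F → E × F) (V : Set F) (R : ℝ) : Set F :=
  {y | ‖y‖ < R ∧ ∀ x : E, ‖x‖ ≤ ‖y‖ → (g (x, y)).2 ∈ V}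

variable [NormedAddCommGroup F]

theorem zero_mem_coneDomain {g : E × F → E × F} {V : Set F} {R : ℝ} (hR : 0 < R) (hg0 : g 0 = 0)
    (hV0 : 0 ∈ V) : 0 ∈ coneDomain g V R := by
  refine ⟨by simpa using hR, fun x hx => ?_⟩
  obtain rfl : x = 0 := norm_le_zero_iff.mp (by simpa using hx)
  simpa [← Prod.zero_eq_mk, hg0] using hV0

theorem mk_mem_ball_of_mem_coneDomain {g : E × F → E × F} {V : Set F} {R : ℝ} {y : F}
    (hy : y ∈ coneDomain g V R) {x : E} (hx : ‖x‖ ≤ ‖y‖) : (x, y) ∈ ball 0 R :=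
  mem_ball_zero_iff.mpr (max_lt (hx.trans_lt hy.1) hy.1)

theorem coneLipschitzBound_graphTransformMap [NormedSpace 𝕜 F] [NormedSpace ℝ E]
    [NormedSpace ℝ F] {A : E ≃L[𝕜] E} {B : F →L[𝕜] F} {g : E × F → E × F} {φ : F → E}
    {V : Set F} {R γ₀ δ : ℝ} (hg : DifferentiableOn 𝕜 g (ball 0 R))
    (hdg : ∀ w ∈ ball (0 : E × F) R, ‖fderiv 𝕜 g w - (A : E →L[𝕜] E).prodMap B‖ ≤ δ)
    (hγ₀ : 0 ≤ γ₀) (hφ : ∀ v ∈ V, ∀ v' ∈ V, ‖φ v - φ v'‖ ≤ γ₀ * ‖v - v'‖) :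
    ConeLipschitzBound (graphTransformMap A g φ) (coneDomain g V R)
      (‖(A.symm : E →L[𝕜] E)‖ * γ₀ * ‖B‖) (‖(A.symm : E →L[𝕜] E)‖ * (δ * (1 + γ₀))) :=
  fun _ hy _ hy' _ _ hx hx' =>
    norm_graphTransformMap_sub_le (convex_ball 0 R)
      (fun _ hw => hg.differentiableAt (isOpen_ball.mem_nhds hw)) hdg hγ₀ hφ
      (mk_mem_ball_of_mem_coneDomain hy hx) (mk_mem_ball_of_mem_coneDomain hy' hx')
      (hy.2 _ hx) (hy'.2 _ hx')

end GraphTransform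

theorem stmt10_general (k₁ k₂ : ℕ)
    (A : EuclideanSpace ℂ (Fin k₁) ≃L[ℂ] EuclideanSpace ℂ (Fin k₁))
    (B : EuclideanSpace ℂ (Fin k₂) →L[ℂ] EuclideanSpace ℂ (Fin k₂))
    (γ₀ δ R₀ : ℝ)
    (hγ₀0 : 0 ≤ γ₀) (hγ₀1 : γ₀ ≤ 1) (hδ : 0 < δ)
    (hcond_b : γ₀ * ‖B‖ + δ * (1 + γ₀) ≤
      γ₀ * (‖(A.symm : EuclideanSpace ℂ (Fin k₁) →L[ℂ] EuclideanSpace ℂ (Fin k₁))‖⁻¹ - δ * (1 + γ₀)))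
    (hR₀ : 0 < R₀)
    (g : EuclideanSpace ℂ (Fin k₁) × EuclideanSpace ℂ (Fin k₂) →
      EuclideanSpace ℂ (Fin k₁) × EuclideanSpace ℂ (Fin k₂))
    (hg0 : g 0 = 0)
    (hghol : DifferentiableOn ℂ g (ball 0 R₀))
    (hdg : ∀ w ∈ ball (0 : EuclideanSpace ℂ (Fin k₁) × EuclideanSpace ℂ (Fin k₂)) R₀,
      ‖fderiv ℂ g w -
        (A : EuclideanSpace ℂ (Fin k₁) →L[ℂ] EuclideanSpace ℂ (Fin k₁)).prodMap B‖ ≤ δ)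
    (V : Set (EuclideanSpace ℂ (Fin k₂))) (hV0 : (0 : EuclideanSpace ℂ (Fin k₂)) ∈ V)
    (φ : EuclideanSpace ℂ (Fin k₂) → EuclideanSpace ℂ (Fin k₁))
    (hφ0 : φ 0 = 0)
    (hφLip : ∀ y ∈ V, ∀ y' ∈ V, ‖φ y - φ y'‖ ≤ γ₀ * ‖y - y'‖)
    (U : Set (EuclideanSpace ℂ (Fin k₂)))
    (hU : U = {y | ‖y‖ < R₀ ∧ ∀ x : EuclideanSpace ℂ (Fin k₁), ‖x‖ ≤ ‖y‖ → (g (x, y)).2 ∈ V})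
    (Λ : EuclideanSpace ℂ (Fin k₂) → EuclideanSpace ℂ (Fin k₁) → EuclideanSpace ℂ (Fin k₁))
    (hΛ : ∀ y x, Λ y x = A.symm (φ ((g (x, y)).2) - ((g (x, y)).1 - A x))) :
    (∀ y ∈ U, ∀ x : EuclideanSpace ℂ (Fin k₁), ‖x‖ ≤ ‖y‖ → ‖Λ y x‖ ≤ ‖y‖) ∧
    (∃ K : ℝ, K < 1 ∧ 0 ≤ K ∧ ∀ y ∈ U, ∀ x x' : EuclideanSpace ℂ (Fin k₁),
      ‖x‖ ≤ ‖y‖ → ‖x'‖ ≤ ‖y‖ → ‖Λ y x - Λ y x'‖ ≤ K * ‖x - x'‖) ∧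
    (∃ ψ : EuclideanSpace ℂ (Fin k₂) → EuclideanSpace ℂ (Fin k₁),
      (∀ y ∈ U, ‖ψ y‖ ≤ ‖y‖ ∧ Λ y (ψ y) = ψ y ∧
        (∀ x : EuclideanSpace ℂ (Fin k₁), ‖x‖ ≤ ‖y‖ → Λ y x = x → x = ψ y)) ∧
      (∀ y ∈ U, ∀ y' ∈ U, ‖ψ y - ψ y'‖ ≤ γ₀ * ‖y - y'‖) ∧
      (∀ y ∈ U, (g (ψ y, y)).2 ∈ V ∧ (g (ψ y, y)).1 = φ ((g (ψ y, y)).2))) := by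
  subst hU
  obtain rfl : Λ = graphTransformMap A g φ := funext fun y => funext (hΛ y)
  set a := ‖(A.symm : EuclideanSpace ℂ (Fin k₁) →L[ℂ] EuclideanSpace ℂ (Fin k₁))‖ * γ₀ * ‖B‖
  set K := ‖(A.symm : EuclideanSpace ℂ (Fin k₁) →L[ℂ] EuclideanSpace ℂ (Fin k₁))‖ * (δ * (1 + γ₀))
  have hK0 : 0 ≤ K := by positivity
  have hsum : a + K ≤ γ₀ * (1 - K) :=
    add_le_mul_one_sub_of_le_mul_inv_sub (norm_nonneg _) hγ₀0 hcond_b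
  have hK1 : K < 1 := lt_one_of_add_le_mul_one_sub (by positivity) hγ₀0 hsum
  have haK : a + K ≤ 1 := hsum.trans (by nlinarith)
  have hU0 := zero_mem_coneDomain hR₀ hg0 hV0
  have hΛ0 := graphTransformMap_zero (A := A) hg0 hφ0
  have hbound := coneLipschitzBound_graphTransformMap (B := B) hghol hdg hγ₀0 hφLip
  obtain ⟨ψ, hψ, hψLip⟩ :=
    hbound.exists_lipschitz_fixedPoint_section hU0 hΛ0 hK0 hK1 hγ₀0 haK hsum
  exact ⟨fun y hy x hx => hbound.norm_apply_le hU0 hΛ0 haK hy hx,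
    ⟨K, hK1, hK0, fun y hy x x' hx hx' => hbound.norm_sub_le hy hx hx'⟩, ψ, hψ, hψLip,
    fun y hy => ⟨hy.2 _ (hψ y hy).1, graphTransformMap_eq_self_iff.mp (hψ y hy).2.1⟩⟩

/-- backward graph transform (Theorem 6.4(1)). -/
theorem stmt10 (k₁ k₂ : ℕ) (hk₁ : 0 < k₁) (hk₂ : 0 < k₂)
    (A : EuclideanSpace ℂ (Fin k₁) ≃L[ℂ] EuclideanSpace ℂ (Fin k₁))
    (B : EuclideanSpace ℂ (Fin k₂) →L[ℂ] EuclideanSpace ℂ (Fin k₂))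
    (hB : ‖B‖ < ‖(A.symm : EuclideanSpace ℂ (Fin k₁) →L[ℂ] EuclideanSpace ℂ (Fin k₁))‖⁻¹)
    (γ γ₀ δ R₀ R₁ : ℝ)
    (hγdef : γ = 1 - ‖B‖ * ‖(A.symm : EuclideanSpace ℂ (Fin k₁) →L[ℂ] EuclideanSpace ℂ (Fin k₁))‖)
    (hγ₀0 : 0 ≤ γ₀) (hγ₀1 : γ₀ ≤ 1) (hδ : 0 < δ)
    (hcond_a : γ₀ * (1 - γ) +
      2 * δ * (1 + γ₀) * ‖(A.symm : EuclideanSpace ℂ (Fin k₁) →L[ℂ] EuclideanSpace ℂ (Fin k₁))‖ ≤ 1)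
    (hcond_b : γ₀ * ‖B‖ + δ * (1 + γ₀) ≤
      γ₀ * (‖(A.symm : EuclideanSpace ℂ (Fin k₁) →L[ℂ] EuclideanSpace ℂ (Fin k₁))‖⁻¹ - δ * (1 + γ₀)))
    (hR₀ : 0 < R₀) (hR₀₁ : R₀ ≤ R₁)
    (g : EuclideanSpace ℂ (Fin k₁) × EuclideanSpace ℂ (Fin k₂) →
      EuclideanSpace ℂ (Fin k₁) × EuclideanSpace ℂ (Fin k₂))
    (hgmaps : Set.MapsTo g (ball 0 R₀) (ball 0 R₁))
    (hg0 : g 0 = 0)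
    (hghol : DifferentiableOn ℂ g (ball 0 R₀))
    (hdg0 : fderiv ℂ g 0 =
      (A : EuclideanSpace ℂ (Fin k₁) →L[ℂ] EuclideanSpace ℂ (Fin k₁)).prodMap B)
    (hdg : ∀ w ∈ ball (0 : EuclideanSpace ℂ (Fin k₁) × EuclideanSpace ℂ (Fin k₂)) R₀,
      ‖fderiv ℂ g w -
        (A : EuclideanSpace ℂ (Fin k₁) →L[ℂ] EuclideanSpace ℂ (Fin k₁)).prodMap B‖ ≤ δ)
    (V : Set (EuclideanSpace ℂ (Fin k₂))) (hV : V ⊆ ball 0 R₁) (hV0 : (0 : EuclideanSpace ℂ (Fin k₂)) ∈ V)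
    (φ : EuclideanSpace ℂ (Fin k₂) → EuclideanSpace ℂ (Fin k₁))
    (hφ0 : φ 0 = 0)
    (hφLip : ∀ y ∈ V, ∀ y' ∈ V, ‖φ y - φ y'‖ ≤ γ₀ * ‖y - y'‖)
    (U : Set (EuclideanSpace ℂ (Fin k₂)))
    (hU : U = {y | ‖y‖ < R₀ ∧ ∀ x : EuclideanSpace ℂ (Fin k₁), ‖x‖ ≤ ‖y‖ → (g (x, y)).2 ∈ V})
    (Λ : EuclideanSpace ℂ (Fin k₂) → EuclideanSpace ℂ (Fin k₁) → EuclideanSpace ℂ (Fin k₁))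
    (hΛ : ∀ y x, Λ y x = A.symm (φ ((g (x, y)).2) - ((g (x, y)).1 - A x))) :
    (∀ y ∈ U, ∀ x : EuclideanSpace ℂ (Fin k₁), ‖x‖ ≤ ‖y‖ → ‖Λ y x‖ ≤ ‖y‖) ∧
    (∃ K : ℝ, K < 1 ∧ 0 ≤ K ∧ ∀ y ∈ U, ∀ x x' : EuclideanSpace ℂ (Fin k₁),
      ‖x‖ ≤ ‖y‖ → ‖x'‖ ≤ ‖y‖ → ‖Λ y x - Λ y x'‖ ≤ K * ‖x - x'‖) ∧
    (∃ ψ : EuclideanSpace ℂ (Fin k₂) → EuclideanSpace ℂ (Fin k₁),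
      (∀ y ∈ U, ‖ψ y‖ ≤ ‖y‖ ∧ Λ y (ψ y) = ψ y ∧
        (∀ x : EuclideanSpace ℂ (Fin k₁), ‖x‖ ≤ ‖y‖ → Λ y x = x → x = ψ y)) ∧
      (∀ y ∈ U, ∀ y' ∈ U, ‖ψ y - ψ y'‖ ≤ γ₀ * ‖y - y'‖) ∧
      (∀ y ∈ U, (g (ψ y, y)).2 ∈ V ∧ (g (ψ y, y)).1 = φ ((g (ψ y, y)).2))) :=
  stmt10_general k₁ k₂ A B γ₀ δ R₀ hγ₀0 hγ₀1 hδ hcond_b hR₀ g hg0 hghol hdg V hV0 φ hφ0 hφLip U hU Λ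
    hΛ
end
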